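/- arXiv:2410.11715 — 4 statements merged into one kernel-verified Lean document; each statement's English description precedes it below -/
import Mathlib

section
/- For real-valued functions u, ω on a set X and points x, y ∈ X, one has u(x)u(y)|∇_{xy}e^{ω/2}|² ≤ (1/2) u(x)² e^{ω(x)} |∇_{xy}e^{ω/2} · ∇_{xy}e^{−ω/2}| + (1/2) u(y)² e^{ω(y)} |∇_{xy}e^{ω/2} · ∇_{xy}e^{−ω/2}|. -/
/-- u(x)u(y)|∇_{xy}e^{ω/2}|² ≤ ½u(x)²e^{ω(x)}|∇_{xy}e^{ω/2}∇_{xy}e^{−ω/2}|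
    + ½u(y)²e^{ω(y)}|∇_{xy}e^{ω/2}∇_{xy}e^{−ω/2}|. -/
theorem stmt2 {X : Type*} (u ω : X → ℝ) (x y : X) :
    u x * u y * |Real.exp (ω x / 2) - Real.exp (ω y / 2)| ^ 2 ≤
      1 / 2 * u x ^ 2 * Real.exp (ω x) *
        |(Real.exp (ω x / 2) - Real.exp (ω y / 2)) *
          (Real.exp (-ω x / 2) - Real.exp (-ω y / 2))| +
      1 / 2 * u y ^ 2 * Real.exp (ω y) *
        |(Real.exp (ω x / 2) - Real.exp (ω y / 2)) *
          (Real.exp (-ω x / 2) - Real.exp (-ω y / 2))| := by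
  set A := Real.exp (ω x / 2) with hAdef
  set B := Real.exp (ω y / 2) with hBdef
  have hA : 0 < A := Real.exp_pos _
  have hB : 0 < B := Real.exp_pos _
  have hex : Real.exp (ω x) = A ^ 2 := by
    rw [hAdef, sq, ← Real.exp_add]; ring_nf
  have hey : Real.exp (ω y) = B ^ 2 := by
    rw [hBdef, sq, ← Real.exp_add]; ring_nf
  have hax : Real.exp (-ω x / 2) = A⁻¹ := by
    rw [hAdef, ← Real.exp_neg]; ring_nf
  have hay : Real.exp (-ω y / 2) = B⁻¹ := by
    rw [hBdef, ← Real.exp_neg]; ring_nf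
  have habs1 : |A - B| ^ 2 = (A - B) ^ 2 := sq_abs _
  have hprod : (A - B) * (A⁻¹ - B⁻¹) = -((A - B) ^ 2 / (A * B)) := by
    field_simp; ring
  have habs2 : |(A - B) * (A⁻¹ - B⁻¹)| = (A - B) ^ 2 / (A * B) := by
    rw [hprod, abs_neg, abs_of_nonneg (by positivity)]
  rw [hex, hey, hax, hay, habs1, habs2]
  have key : u x * u y * (A * B) ≤ 1 / 2 * u x ^ 2 * A ^ 2 + 1 / 2 * u y ^ 2 * B ^ 2 := by
    nlinarith [sq_nonneg (u x * A - u y * B)]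
  have h2 : (0:ℝ) ≤ (A - B) ^ 2 / (A * B) := by positivity
  calc u x * u y * (A - B) ^ 2
      = (u x * u y * (A * B)) * ((A - B) ^ 2 / (A * B)) := by
        field_simp
    _ ≤ (1 / 2 * u x ^ 2 * A ^ 2 + 1 / 2 * u y ^ 2 * B ^ 2) * ((A - B) ^ 2 / (A * B)) :=
        mul_le_mul_of_nonneg_right key h2
    _ = _ := by ring
end

section
/- For every x > 0, one has arsinh(x)² ≤ 2(√(1 + x²) − 1), i.e., the function x ↦ arsinh(x)²/(√(1+x²) − 1) is bounded above by 2 on (0, ∞). -/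
/-- arsinh(x)² ≤ 2(√(1+x²) − 1) for all x > 0. -/
theorem stmt4 (x : ℝ) (hx : 0 < x) :
    Real.arsinh x ^ 2 ≤ 2 * (Real.sqrt (1 + x ^ 2) - 1) := by
  set t := Real.arsinh x with ht
  have ht0 : 0 < t := Real.arsinh_pos_iff.2 hx
  have hc : Real.sqrt (1 + x ^ 2) = Real.cosh t := (Real.cosh_arsinh x).symm
  rw [hc]
  have h2 : Real.cosh t = 2 * Real.sinh (t / 2) ^ 2 + 1 := by
    have := Real.cosh_two_mul (t / 2)
    have hsq := Real.cosh_sq (t / 2)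
    rw [show 2 * (t / 2) = t by ring] at this
    nlinarith
  have hs : t / 2 < Real.sinh (t / 2) := Real.self_lt_sinh_iff.2 (by linarith)
  nlinarith [hs]
end

section
/- For q = n/(n+2) with n > 0, the maximum of f(x) = x^{(1/x)^{log₂√(1/q)}} over x > 0 is at most 2^{n+2}. -/
/-!
Write `c = log₂ √(1/q)`, so that `f x = exp (log x / x ^ c)`. The elementary bound
`log x ≤ x ^ c / c` gives `f x ≤ exp (1 / c)`, and `1 - q ≤ log (1 / q)` with `1 - q = 2 / (n + 2)`
gives `1 / c ≤ (n + 2) log 2`.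
-/

open Real

theorem Real.rpow_one_div_rpow_le_exp_one_div {c x : ℝ} (hc : 0 < c) (hx : 0 < x) :
    x ^ ((1 / x) ^ c) ≤ exp (1 / c) := by
  have hxc : 0 < x ^ c := rpow_pos_of_pos hx c
  have hlog : log x * (x ^ c)⁻¹ ≤ 1 / c := by
    rw [← div_eq_mul_inv, div_le_iff₀ hxc, one_div_mul_eq_div]
    exact log_le_rpow_div hx.le hc
  rw [one_div x, inv_rpow hx.le, rpow_def_of_pos hx]
  exact exp_le_exp.mpr hlog

theorem Real.inv_le_logb_two_sqrt_add_two_div {n : ℝ} (hn : 0 < n) :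
    ((n + 2) * log 2)⁻¹ ≤ logb 2 (√((n + 2) / n)) := by
  have hlog : 2 / (n + 2) ≤ log ((n + 2) / n) := by
    have h := one_sub_inv_le_log_of_pos (by positivity : 0 < (n + 2) / n)
    rwa [inv_div, one_sub_div (by positivity), add_sub_cancel_left] at h
  calc ((n + 2) * log 2)⁻¹ = 2 / (n + 2) / (2 * log 2) := by field_simp
    _ ≤ log ((n + 2) / n) / (2 * log 2) := by gcongr
    _ = logb 2 (√((n + 2) / n)) := by rw [logb, log_sqrt (by positivity), div_div]

/-- for q = n/(n+2), n > 0, f(x) = x^{(1/x)^{log₂√(1/q)}} ≤ 2^{n+2}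
    for all x > 0. -/
theorem stmt8 (n q : ℝ) (hn : 0 < n) (hq : q = n / (n + 2)) (x : ℝ) (hx : 0 < x) :
    x ^ ((1 / x) ^ Real.logb 2 (Real.sqrt (1 / q))) ≤ (2 : ℝ) ^ (n + 2) := by
  rw [hq, one_div_div]
  have hc := inv_le_logb_two_sqrt_add_two_div hn
  have hc0 : 0 < logb 2 (√((n + 2) / n)) := lt_of_lt_of_le (by positivity) hc
  calc x ^ ((1 / x) ^ logb 2 (√((n + 2) / n)))
      ≤ exp (1 / logb 2 (√((n + 2) / n))) := rpow_one_div_rpow_le_exp_one_div hc0 hx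
    _ ≤ exp ((n + 2) * log 2) := by
      gcongr
      rw [one_div]
      exact inv_le_of_inv_le₀ (by positivity) hc
    _ = 2 ^ (n + 2) := by rw [rpow_def_of_pos two_pos, mul_comm]
end

section
/- Let b be a graph over (X,m) with intrinsic metric ρ of jump size S, and let η > 0. Set h(η) = (cosh(ηS) − 1)/S². Let o ∈ X, R ≥ 0, ρ₀ = (ρ(o,·) − R)₊ (positive part), and for T ≥ 0 define ω_t(x) = −2η·ρ₀(x) − 2(t−T)h(η) on [0,T] × X. Then ω satisfies the eikonal inequality dΓ(e^{ω_t/2}, e^{−ω_t/2})(x) ≤ −(d/dt)ω_t(x) for all t ∈ (0,T) and x ∈ X, where dΓ(φ,ψ)(x) = ∑_y (b(x,y)/m(x)) |∇_{xy}φ · ∇_{xy}ψ|. -/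
private lemma aux_convex_sinh : ConvexOn ℝ (Set.Ici (0:ℝ)) Real.sinh := by
  apply convexOn_of_deriv2_nonneg (convex_Ici 0) Real.continuous_sinh.continuousOn
    Real.differentiable_sinh.differentiableOn
  · rw [Real.deriv_sinh]
    exact Real.differentiable_cosh.differentiableOn
  · intro x hx
    rw [interior_Ici, Set.mem_Ioi] at hx
    have hi : deriv^[2] Real.sinh = Real.sinh := by
      ext y
      simp [Function.iterate_succ_apply', Real.deriv_sinh, Real.deriv_cosh]
    rw [hi]
    exact Real.sinh_nonneg_iff.2 hx.le

private lemma aux_sinh_mul_le {l u : ℝ} (hl0 : 0 ≤ l) (hl1 : l ≤ 1) (hu : 0 ≤ u) :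
    Real.sinh (l * u) ≤ l * Real.sinh u := by
  have := aux_convex_sinh.2 (Set.self_mem_Ici (a := (0:ℝ)))
    (Set.mem_Ici.2 hu) (by linarith : (0:ℝ) ≤ 1 - l) hl0 (by ring)
  simpa [Real.sinh_zero] using this

private lemma aux_cosh_sub_one {r s : ℝ} (hr : 0 ≤ r) (hrs : r ≤ s) (hs : 0 < s) :
    Real.cosh r - 1 ≤ r ^ 2 / s ^ 2 * (Real.cosh s - 1) := by
  have hl0 : 0 ≤ r / s := div_nonneg hr hs.le
  have hl1 : r / s ≤ 1 := (div_le_one hs).2 hrs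
  have key : Real.sinh (r / 2) ≤ r / s * Real.sinh (s / 2) := by
    have h2 := aux_sinh_mul_le hl0 hl1 (by linarith : (0:ℝ) ≤ s / 2)
    rw [show r / s * (s / 2) = r / 2 by field_simp] at h2
    exact h2
  have h1 : 0 ≤ Real.sinh (r / 2) := Real.sinh_nonneg_iff.2 (by linarith)
  have hsq : Real.sinh (r / 2) ^ 2 ≤ (r / s) ^ 2 * Real.sinh (s / 2) ^ 2 := by
    rw [← mul_pow]
    exact pow_le_pow_left₀ h1 key 2
  have e1 : Real.cosh r = 1 + 2 * Real.sinh (r / 2) ^ 2 := by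
    have := Real.cosh_two_mul (r / 2)
    rw [show 2 * (r / 2) = r by ring] at this
    rw [this, Real.cosh_sq]; ring
  have e2 : Real.cosh s = 1 + 2 * Real.sinh (s / 2) ^ 2 := by
    have := Real.cosh_two_mul (s / 2)
    rw [show 2 * (s / 2) = s by ring] at this
    rw [this, Real.cosh_sq]; ring
  have hdp : r ^ 2 / s ^ 2 = (r / s) ^ 2 := (div_pow r s 2).symm
  rw [e1, e2, hdp]
  nlinarith [hsq]

private lemma aux_prod_eq (A B : ℝ) :
    (Real.exp (A / 2) - Real.exp (B / 2)) * (Real.exp (-A / 2) - Real.exp (-B / 2)) =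
      2 - 2 * Real.cosh ((A - B) / 2) := by
  have h1 : Real.exp (A / 2) * Real.exp (-A / 2) = 1 := by
    rw [← Real.exp_add, show A / 2 + -A / 2 = 0 by ring, Real.exp_zero]
  have h2 : Real.exp (B / 2) * Real.exp (-B / 2) = 1 := by
    rw [← Real.exp_add, show B / 2 + -B / 2 = 0 by ring, Real.exp_zero]
  have h3 : Real.exp (A / 2) * Real.exp (-B / 2) = Real.exp ((A - B) / 2) := by
    rw [← Real.exp_add]; ring_nf
  have h4 : Real.exp (B / 2) * Real.exp (-A / 2) = Real.exp (-((A - B) / 2)) := by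
    rw [← Real.exp_add]; ring_nf
  have hc : Real.cosh ((A - B) / 2) =
      (Real.exp ((A - B) / 2) + Real.exp (-((A - B) / 2))) / 2 := Real.cosh_eq _
  nlinarith [h1, h2, h3, h4, hc]

set_option maxHeartbeats 1000000 in
/-- the function ω_t(x) = −2η ρ₀(x) − 2(t−T)h(η), with
    h(η) = (cosh(ηS) − 1)/S² and ρ₀ = (ρ(o,·) − R)₊, satisfies the eikonal inequality
    dΓ(e^{ω_t/2}, e^{−ω_t/2})(x) ≤ −(d/dt)ω_t(x) on (0,T) × X. -/
theorem stmt16 {X : Type*} (m : X → ℝ) (b : X → X → ℝ) (ρ : X → X → ℝ)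
    (hm : ∀ x, 0 < m x)
    (hb_symm : ∀ x y, b x y = b y x)
    (hb_nonneg : ∀ x y, 0 ≤ b x y)
    (hb_diag : ∀ x, b x x = 0)
    (hb_deg : ∀ x, Summable (fun y => b x y))
    (hρ_nonneg : ∀ x y, 0 ≤ ρ x y)
    (hρ_symm : ∀ x y, ρ x y = ρ y x)
    (hρ_refl : ∀ x, ρ x x = 0)
    (hρ_tri : ∀ x y z, ρ x z ≤ ρ x y + ρ y z)
    (h_intrinsic : ∀ x, ∑' y, b x y * ρ x y ^ 2 ≤ m x)
    (S : ℝ) (hS : 0 < S) (hjump : ∀ x y, 0 < b x y → ρ x y ≤ S)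
    (η : ℝ) (hη : 0 < η)
    (h : ℝ) (hh : h = (Real.cosh (η * S) - 1) / S ^ 2)
    (o : X) (R : ℝ) (hR : 0 ≤ R)
    (ρ₀ : X → ℝ) (hρ₀ : ρ₀ = fun x => max (ρ o x - R) 0)
    (T : ℝ) (hT : 0 ≤ T)
    (ω : ℝ → X → ℝ) (hω : ω = fun t x => -2 * η * ρ₀ x - 2 * (t - T) * h) :
    ∀ t ∈ Set.Ioo (0 : ℝ) T, ∀ x : X,
      (∑' y, b x y / m x *
          |(Real.exp (ω t x / 2) - Real.exp (ω t y / 2)) *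
            (Real.exp (-ω t x / 2) - Real.exp (-ω t y / 2))|) ≤
        -(deriv (fun s => ω s x) t) := by
  intro t ht x
  have hcosh1 : 1 < Real.cosh (η * S) :=
    Real.one_lt_cosh.2 (by positivity)
  have hpos : 0 < h := by
    rw [hh]
    have : 0 < Real.cosh (η * S) - 1 := by linarith
    positivity
  -- the time derivative
  have hderiv : deriv (fun s => ω s x) t = -(2 * h) := by
    have H : HasDerivAt (fun s : ℝ => ω s x) (-(2 * h)) t := by
      rw [hω]
      have h1 : HasDerivAt (fun s : ℝ => -(2 * h) * (s - T) + -2 * η * ρ₀ x)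
          (-(2 * h) * 1) t :=
        (((hasDerivAt_id t).sub_const T).const_mul (-(2 * h))).add_const _
      have he : (fun s : ℝ => -2 * η * ρ₀ x - 2 * (s - T) * h) =
          (fun s : ℝ => -(2 * h) * (s - T) + -2 * η * ρ₀ x) := by
        funext s; ring
      rw [he]
      simpa using h1
    exact H.deriv
  rw [hderiv, neg_neg]
  -- Lipschitz property of ρ₀
  have hlip : ∀ y : X, |ρ₀ x - ρ₀ y| ≤ ρ x y := by
    intro y
    have habs : |ρ o x - ρ o y| ≤ ρ x y := by
      rw [abs_sub_le_iff]
      constructor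
      · have h1 := hρ_tri o y x
        have hsy := hρ_symm y x
        linarith
      · have h1 := hρ_tri o x y
        linarith
    have hmax := abs_max_sub_max_le_abs (ρ o x - R) (ρ o y - R) 0
    rw [hρ₀]
    simp only
    calc |max (ρ o x - R) 0 - max (ρ o y - R) 0| ≤ |ρ o x - R - (ρ o y - R)| := hmax
      _ = |ρ o x - ρ o y| := by ring_nf
      _ ≤ ρ x y := habs
  -- pointwise bound
  have hbound : ∀ y : X,
      b x y / m x *
          |(Real.exp (ω t x / 2) - Real.exp (ω t y / 2)) *
            (Real.exp (-ω t x / 2) - Real.exp (-ω t y / 2))| ≤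
        2 * h / m x * (b x y * ρ x y ^ 2) := by
    intro y
    rcases eq_or_lt_of_le (hb_nonneg x y) with hb0 | hb0
    · rw [← hb0]; simp
    · have hρS : ρ x y ≤ S := hjump x y hb0
      set A := ω t x with hA
      set B := ω t y with hB
      have hprod : (Real.exp (A / 2) - Real.exp (B / 2)) *
          (Real.exp (-A / 2) - Real.exp (-B / 2)) = 2 - 2 * Real.cosh ((A - B) / 2) :=
        aux_prod_eq A B
      have hone : 1 ≤ Real.cosh ((A - B) / 2) := Real.one_le_cosh _
      have habs2 : |(Real.exp (A / 2) - Real.exp (B / 2)) *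
          (Real.exp (-A / 2) - Real.exp (-B / 2))| = 2 * Real.cosh ((A - B) / 2) - 2 := by
        rw [hprod, abs_of_nonpos (by linarith)]; ring
      have hd : |(A - B) / 2| ≤ η * ρ x y := by
        have hAB : (A - B) / 2 = η * (ρ₀ y - ρ₀ x) := by
          rw [hA, hB, hω]; ring
        rw [hAB, abs_mul, abs_of_pos hη]
        have hyx : |ρ₀ y - ρ₀ x| ≤ ρ x y := by
          rw [abs_sub_comm]; exact hlip y
        nlinarith
      have hdS : |(A - B) / 2| ≤ η * S := le_trans hd (by nlinarith)
      have hcosh : Real.cosh ((A - B) / 2) - 1 ≤ h * ρ x y ^ 2 := by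
        have h1 := aux_cosh_sub_one (abs_nonneg ((A - B) / 2)) hdS (by positivity)
        rw [Real.cosh_abs] at h1
        have h2 : |(A - B) / 2| ^ 2 ≤ η ^ 2 * ρ x y ^ 2 := by
          nlinarith [abs_nonneg ((A - B) / 2), hρ_nonneg x y]
        have h3 : |(A - B) / 2| ^ 2 / (η * S) ^ 2 * (Real.cosh (η * S) - 1) ≤
            η ^ 2 * ρ x y ^ 2 / (η * S) ^ 2 * (Real.cosh (η * S) - 1) := by
          gcongr
        have h4 : η ^ 2 * ρ x y ^ 2 / (η * S) ^ 2 * (Real.cosh (η * S) - 1) =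
            h * ρ x y ^ 2 := by
          rw [hh]; field_simp
        linarith
      rw [habs2]
      have hbm : 0 ≤ b x y / m x := div_nonneg hb0.le (hm x).le
      calc b x y / m x * (2 * Real.cosh ((A - B) / 2) - 2)
          ≤ b x y / m x * (2 * h * ρ x y ^ 2) :=
            mul_le_mul_of_nonneg_left (by linarith) hbm
        _ = 2 * h / m x * (b x y * ρ x y ^ 2) := by
            field_simp
  -- summability
  have hsum2 : Summable (fun y => b x y * ρ x y ^ 2) := by
    refine Summable.of_nonneg_of_le
      (fun y => mul_nonneg (hb_nonneg x y) (sq_nonneg _))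
      (fun y => ?_) ((hb_deg x).mul_left (S ^ 2))
    rcases eq_or_lt_of_le (hb_nonneg x y) with h0 | h0
    · rw [← h0]; simp
    · have hrS := hjump x y h0
      have hr2 : ρ x y ^ 2 ≤ S ^ 2 := by nlinarith [hρ_nonneg x y]
      nlinarith [mul_le_mul_of_nonneg_left hr2 h0.le]
  have hsumg : Summable (fun y => 2 * h / m x * (b x y * ρ x y ^ 2)) := hsum2.mul_left _
  have hsumf : Summable (fun y => b x y / m x *
      |(Real.exp (ω t x / 2) - Real.exp (ω t y / 2)) *
        (Real.exp (-ω t x / 2) - Real.exp (-ω t y / 2))|) :=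
    Summable.of_nonneg_of_le
      (fun y => mul_nonneg (div_nonneg (hb_nonneg x y) (hm x).le) (abs_nonneg _))
      hbound hsumg
  calc (∑' y, b x y / m x *
          |(Real.exp (ω t x / 2) - Real.exp (ω t y / 2)) *
            (Real.exp (-ω t x / 2) - Real.exp (-ω t y / 2))|)
      ≤ ∑' y, 2 * h / m x * (b x y * ρ x y ^ 2) := Summable.tsum_le_tsum hbound hsumf hsumg
    _ = 2 * h / m x * ∑' y, b x y * ρ x y ^ 2 := tsum_mul_left
    _ ≤ 2 * h / m x * m x :=
        mul_le_mul_of_nonneg_left (h_intrinsic x)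
          (div_nonneg (by linarith) (hm x).le)
    _ = 2 * h := by
        rw [div_mul_eq_mul_div, mul_div_assoc, div_self (hm x).ne', mul_one]
end
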